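/- For every positive integer n and all complex numbers z, t with t ≠ 0, z^i ≠ 1 for 1 ≤ i ≤ n, and t z^j ≠ 1 for 1 ≤ j ≤ n, one has Σ_{l=0}^{n} ( t^{−n} z^{n−l} − z^{l} ) · ∏_{i=1}^{l} ( (t − z^{i})(1 − z^{n−i+1}) ) / ( (1 − t z^{n−i+1})(1 − z^{i}) ) = 0. (Taking t = q^m this is the identity Σ_{l=0}^{n} (q^{−nm} z^{n−l} − z^{l}) ∏_{i=1}^{l} ((q^m − z^i)(1 − z^{n−i+1}))/((1 − q^m z^{n−i+1})(1 − z^i)) = 0.) -/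

import Mathlib

open scoped BigOperators

open Finset

noncomputable def Cz (z : ℂ) (n l : ℕ) : ℂ :=
  (∏ i ∈ range l, (1 - z ^ (n - i))) / ∏ i ∈ range l, (1 - z ^ (i + 1))

lemma Cz_zero (z : ℂ) (n : ℕ) : Cz z n 0 = 1 := by simp [Cz]

lemma Cz_top (z : ℂ) (n : ℕ) : Cz z n (n + 1) = 0 := by
  unfold Cz
  rw [Finset.prod_eq_zero (Finset.self_mem_range_succ n) (by simp)]
  simp

lemma num_succ (z : ℂ) (n l : ℕ) :
    (∏ i ∈ range (l+1), (1 - z ^ ((n+1) - i)))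
      = (1 - z ^ (n+1)) * ∏ i ∈ range l, (1 - z ^ (n - i)) := by
  rw [Finset.prod_range_succ']
  simp [Nat.succ_sub_succ, mul_comm]

lemma pascal1 (z : ℂ) (n l : ℕ) (hl : l ≤ n)
    (hd : (∏ i ∈ range l, (1 - z ^ (i + 1))) ≠ 0) (h1 : (1:ℂ) - z ^ (l+1) ≠ 0) :
    Cz z (n+1) (l+1) = Cz z n (l+1) + z ^ (n - l) * Cz z n l := by
  have hp : z ^ (n - l) * z ^ (l + 1) = z ^ (n + 1) := by
    rw [← pow_add]; congr 1; omega
  unfold Cz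
  rw [num_succ, Finset.prod_range_succ, Finset.prod_range_succ,
    show n + 1 = (n - l) + (l + 1) by omega, pow_add]
  field_simp
  ring

lemma pascal2 (z : ℂ) (n l : ℕ) (hl : l ≤ n)
    (hd : (∏ i ∈ range l, (1 - z ^ (i + 1))) ≠ 0) (h1 : (1:ℂ) - z ^ (l+1) ≠ 0) :
    Cz z (n+1) (l+1) = Cz z n l + z ^ (l+1) * Cz z n (l+1) := by
  have hp : z ^ (l + 1) * z ^ (n - l) = z ^ (n + 1) := by
    rw [← pow_add]; congr 1; omega
  unfold Cz
  rw [num_succ, Finset.prod_range_succ, Finset.prod_range_succ,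
    show n + 1 = (n - l) + (l + 1) by omega, pow_add]
  field_simp
  ring

lemma dprod_ne (z : ℂ) (n l : ℕ) (hl : l ≤ n)
    (hz : ∀ i : ℕ, 1 ≤ i → i ≤ n → z ^ i ≠ 1) :
    (∏ i ∈ range l, (1 - z ^ (i + 1))) ≠ 0 := by
  rw [Finset.prod_ne_zero_iff]
  intro i hi
  have := hz (i+1) (by omega) (by have := Finset.mem_range.mp hi; omega)
  exact sub_ne_zero.mpr (by simpa [eq_comm] using this)

lemma keyB (z : ℂ) (n : ℕ) (hz : ∀ i : ℕ, 1 ≤ i → i ≤ n → z ^ i ≠ 1) (t : ℂ) :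
    ∑ l ∈ range (n+1), z ^ l * Cz z n l * (∏ i ∈ range (n - l), (1 - t * z ^ (i+1)))
        * (∏ i ∈ range l, (t - z ^ (i+1)))
      = ∏ i ∈ range n, (1 - z ^ (i+2)) := by
  induction n with
  | zero => simp [Cz]
  | succ n ih =>
    have hz' : ∀ i : ℕ, 1 ≤ i → i ≤ n → z ^ i ≠ 1 := fun i h1 h2 => hz i h1 (by omega)
    rw [Finset.sum_range_succ']
    have step : ∀ l ∈ range (n+1),
        z ^ (l+1) * Cz z (n+1) (l+1) * (∏ i ∈ range ((n+1) - (l+1)), (1 - t * z ^ (i+1)))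
          * (∏ i ∈ range (l+1), (t - z ^ (i+1)))
        = (z ^ (l+1) * Cz z n (l+1) * (∏ i ∈ range ((n+1) - (l+1)), (1 - t * z ^ (i+1)))
            * (∏ i ∈ range (l+1), (t - z ^ (i+1))))
          + z ^ (n+1) * Cz z n l * (∏ i ∈ range (n - l), (1 - t * z ^ (i+1)))
            * ((∏ i ∈ range l, (t - z ^ (i+1))) * (t - z ^ (l+1))) := by
      intro l hl
      have hl' : l ≤ n := by have := Finset.mem_range.mp hl; omega
      rw [pascal1 z n l hl' (dprod_ne z n l hl' hz')
          (sub_ne_zero.mpr (by simpa [eq_comm] using hz (l+1) (by omega) (by omega)))]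
      rw [Nat.succ_sub_succ, Finset.prod_range_succ,
        show n + 1 = (n - l) + (l + 1) by omega, pow_add]
      ring
    rw [Finset.sum_congr rfl step, Finset.sum_add_distrib]
    have hA1 : (∑ l ∈ range (n+1),
        z ^ (l+1) * Cz z n (l+1) * (∏ i ∈ range ((n+1) - (l+1)), (1 - t * z ^ (i+1)))
          * (∏ i ∈ range (l+1), (t - z ^ (i+1))))
        + z ^ 0 * Cz z n 0 * (∏ i ∈ range ((n+1) - 0), (1 - t * z ^ (i+1)))
          * (∏ i ∈ range 0, (t - z ^ (i+1)))
        = ∑ l ∈ range (n+1),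
            z ^ l * Cz z n l * (∏ i ∈ range ((n+1) - l), (1 - t * z ^ (i+1)))
              * (∏ i ∈ range l, (t - z ^ (i+1))) := by
      rw [← Finset.sum_range_succ' (fun l => z ^ l * Cz z n l
          * (∏ i ∈ range ((n+1) - l), (1 - t * z ^ (i+1))) * (∏ i ∈ range l, (t - z ^ (i+1)))) (n+1)]
      rw [Finset.sum_range_succ]
      simp [Cz_top]
    simp only [Cz_zero] at hA1 ⊢
    rw [add_right_comm, hA1, ← Finset.sum_add_distrib]
    have step2 : ∀ l ∈ range (n+1),
        (z ^ l * Cz z n l * (∏ i ∈ range ((n+1) - l), (1 - t * z ^ (i+1)))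
          * (∏ i ∈ range l, (t - z ^ (i+1))))
        + z ^ (n+1) * Cz z n l * (∏ i ∈ range (n - l), (1 - t * z ^ (i+1)))
          * ((∏ i ∈ range l, (t - z ^ (i+1))) * (t - z ^ (l+1)))
        = (1 - z ^ (n+2)) * (z ^ l * Cz z n l * (∏ i ∈ range (n - l), (1 - t * z ^ (i+1)))
            * (∏ i ∈ range l, (t - z ^ (i+1)))) := by
      intro l hl
      have hl' : l ≤ n := by have := Finset.mem_range.mp hl; omega
      rw [show (n+1) - l = (n - l) + 1 by omega, Finset.prod_range_succ]
      have h1 : z ^ l * z ^ ((n - l) + 1) = z ^ (n+1) := by rw [← pow_add]; congr 1; omega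
      have h2 : z ^ (n+1) * z ^ (l+1) = z ^ l * z ^ (n+2) := by
        rw [← pow_add, ← pow_add]; congr 1; omega
      set C := Cz z n l
      set F := ∏ i ∈ range (n - l), (1 - t * z ^ (i+1))
      set G := ∏ i ∈ range l, (t - z ^ (i+1))
      linear_combination (-t * C * F * G) * h1 - (C * F * G) * h2
    rw [Finset.sum_congr rfl step2, ← Finset.mul_sum, ih hz', Finset.prod_range_succ]
    ring

lemma keyBhat (z : ℂ) (n : ℕ) (hz : ∀ i : ℕ, 1 ≤ i → i ≤ n → z ^ i ≠ 1) (t : ℂ) :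
    ∑ l ∈ range (n+1), z ^ (n - l) * Cz z n l * (∏ i ∈ range (n - l), (1 - t * z ^ (i+1)))
        * (∏ i ∈ range l, (t - z ^ (i+1)))
      = t ^ n * ∏ i ∈ range n, (1 - z ^ (i+2)) := by
  induction n with
  | zero => simp [Cz]
  | succ n ih =>
    have hz' : ∀ i : ℕ, 1 ≤ i → i ≤ n → z ^ i ≠ 1 := fun i h1 h2 => hz i h1 (by omega)
    rw [Finset.sum_range_succ']
    have step : ∀ l ∈ range (n+1),
        z ^ ((n+1) - (l+1)) * Cz z (n+1) (l+1) * (∏ i ∈ range ((n+1) - (l+1)), (1 - t * z ^ (i+1)))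
          * (∏ i ∈ range (l+1), (t - z ^ (i+1)))
        = (z ^ (n+1) * Cz z n (l+1) * (∏ i ∈ range ((n+1) - (l+1)), (1 - t * z ^ (i+1)))
            * (∏ i ∈ range (l+1), (t - z ^ (i+1))))
          + z ^ (n - l) * Cz z n l * (∏ i ∈ range (n - l), (1 - t * z ^ (i+1)))
            * ((∏ i ∈ range l, (t - z ^ (i+1))) * (t - z ^ (l+1))) := by
      intro l hl
      have hl' : l ≤ n := by have := Finset.mem_range.mp hl; omega
      rw [pascal2 z n l hl' (dprod_ne z n l hl' hz')
          (sub_ne_zero.mpr (by simpa [eq_comm] using hz (l+1) (by omega) (by omega)))]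
      rw [Nat.succ_sub_succ, Finset.prod_range_succ,
        show n + 1 = (n - l) + (l + 1) by omega, pow_add]
      ring
    rw [Finset.sum_congr rfl step, Finset.sum_add_distrib]
    have hA1 : (∑ l ∈ range (n+1),
        z ^ (n+1) * Cz z n (l+1) * (∏ i ∈ range ((n+1) - (l+1)), (1 - t * z ^ (i+1)))
          * (∏ i ∈ range (l+1), (t - z ^ (i+1))))
        + z ^ (n+1) * Cz z n 0 * (∏ i ∈ range ((n+1) - 0), (1 - t * z ^ (i+1)))
          * (∏ i ∈ range 0, (t - z ^ (i+1)))
        = ∑ l ∈ range (n+1),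
            z ^ (n+1) * Cz z n l * (∏ i ∈ range ((n+1) - l), (1 - t * z ^ (i+1)))
              * (∏ i ∈ range l, (t - z ^ (i+1))) := by
      rw [← Finset.sum_range_succ' (fun l => z ^ (n+1) * Cz z n l
          * (∏ i ∈ range ((n+1) - l), (1 - t * z ^ (i+1))) * (∏ i ∈ range l, (t - z ^ (i+1)))) (n+1)]
      rw [Finset.sum_range_succ]
      simp [Cz_top]
    simp only [Cz_zero, Nat.sub_zero] at hA1 ⊢
    rw [add_right_comm, hA1, ← Finset.sum_add_distrib]
    have step2 : ∀ l ∈ range (n+1),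
        (z ^ (n+1) * Cz z n l * (∏ i ∈ range ((n+1) - l), (1 - t * z ^ (i+1)))
          * (∏ i ∈ range l, (t - z ^ (i+1))))
        + z ^ (n - l) * Cz z n l * (∏ i ∈ range (n - l), (1 - t * z ^ (i+1)))
          * ((∏ i ∈ range l, (t - z ^ (i+1))) * (t - z ^ (l+1)))
        = (t * (1 - z ^ (n+2))) * (z ^ (n - l) * Cz z n l
            * (∏ i ∈ range (n - l), (1 - t * z ^ (i+1))) * (∏ i ∈ range l, (t - z ^ (i+1)))) := by
      intro l hl
      have hl' : l ≤ n := by have := Finset.mem_range.mp hl; omega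
      rw [show (n+1) - l = (n - l) + 1 by omega, Finset.prod_range_succ]
      have h1 : z ^ (n - l) * z ^ (l+1) = z ^ (n+1) := by rw [← pow_add]; congr 1; omega
      have h2 : z ^ (n+1) * z ^ ((n - l) + 1) = z ^ (n - l) * z ^ (n+2) := by
        rw [← pow_add, ← pow_add]; congr 1; omega
      set C := Cz z n l
      set F := ∏ i ∈ range (n - l), (1 - t * z ^ (i+1))
      set G := ∏ i ∈ range l, (t - z ^ (i+1))
      linear_combination (-t * C * F * G) * h2 - (C * F * G) * h1
    rw [Finset.sum_congr rfl step2, ← Finset.mul_sum, ih hz', Finset.prod_range_succ]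
    ring

/-- Corollary 2.10: a curious terminating summation identity; the case `t = q^m` is
`Σ_{l=0}^n (q^{-nm} z^{n-l} - z^l) ∏_{i=1}^l ((q^m - z^i)(1 - z^{n-i+1}))/((1 - q^m z^{n-i+1})(1 - z^i)) = 0`. -/
theorem curious_z_identity (n : ℕ) (hn : 1 ≤ n) (z t : ℂ) (ht : t ≠ 0)
    (hz : ∀ i : ℕ, 1 ≤ i → i ≤ n → z ^ i ≠ 1)
    (htz : ∀ j : ℕ, 1 ≤ j → j ≤ n → t * z ^ j ≠ 1) :
    ∑ l ∈ Finset.range (n + 1),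
      (t ^ (-(n : ℤ)) * z ^ (n - l) - z ^ l) *
        ∏ i ∈ Finset.range l,
          ((t - z ^ (i + 1)) * (1 - z ^ (n - i))) /
            ((1 - t * z ^ (n - i)) * (1 - z ^ (i + 1))) = 0 := by
  have hD : (t ^ n * ∏ j ∈ range n, (1 - t * z ^ (j+1))) ≠ 0 := by
    refine mul_ne_zero (pow_ne_zero _ ht) ?_
    rw [Finset.prod_ne_zero_iff]
    intro j hj
    have := htz (j+1) (by omega) (by have := Finset.mem_range.mp hj; omega)
    exact sub_ne_zero.mpr (by simpa [eq_comm] using this)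
  have h : (∑ l ∈ Finset.range (n + 1),
      (t ^ (-(n : ℤ)) * z ^ (n - l) - z ^ l) *
        ∏ i ∈ Finset.range l,
          ((t - z ^ (i + 1)) * (1 - z ^ (n - i))) /
            ((1 - t * z ^ (n - i)) * (1 - z ^ (i + 1))))
      * (t ^ n * ∏ j ∈ range n, (1 - t * z ^ (j+1))) = 0 := by
    rw [Finset.sum_mul]
    have step : ∀ l ∈ range (n+1),
        ((t ^ (-(n : ℤ)) * z ^ (n - l) - z ^ l) *
          ∏ i ∈ Finset.range l,
            ((t - z ^ (i + 1)) * (1 - z ^ (n - i))) /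
              ((1 - t * z ^ (n - i)) * (1 - z ^ (i + 1))))
          * (t ^ n * ∏ j ∈ range n, (1 - t * z ^ (j+1)))
        = (z ^ (n - l) * Cz z n l * (∏ i ∈ range (n - l), (1 - t * z ^ (i+1)))
            * (∏ i ∈ range l, (t - z ^ (i+1))))
          - t ^ n * (z ^ l * Cz z n l * (∏ i ∈ range (n - l), (1 - t * z ^ (i+1)))
            * (∏ i ∈ range l, (t - z ^ (i+1)))) := by
      intro l hl
      have hl' : l ≤ n := by have := Finset.mem_range.mp hl; omega
      have hprod : (∏ i ∈ Finset.range l,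
            ((t - z ^ (i + 1)) * (1 - z ^ (n - i))) /
              ((1 - t * z ^ (n - i)) * (1 - z ^ (i + 1))))
          = ((∏ i ∈ range l, (t - z ^ (i+1))) * ∏ i ∈ range l, (1 - z ^ (n - i)))
            / ((∏ i ∈ range l, (1 - t * z ^ (n - i))) * ∏ i ∈ range l, (1 - z ^ (i+1))) := by
        rw [Finset.prod_div_distrib, Finset.prod_mul_distrib, Finset.prod_mul_distrib]
      have hsplit : (∏ j ∈ range n, (1 - t * z ^ (j+1)))
          = (∏ i ∈ range (n - l), (1 - t * z ^ (i+1))) * ∏ i ∈ range l, (1 - t * z ^ (n - i)) := by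
        have e : n = (n - l) + l := by omega
        calc ∏ j ∈ range n, (1 - t * z ^ (j+1))
            = ∏ j ∈ range ((n - l) + l), (1 - t * z ^ (j+1)) := by rw [← e]
          _ = (∏ i ∈ range (n - l), (1 - t * z ^ (i+1)))
              * ∏ i ∈ range l, (1 - t * z ^ ((n - l) + i + 1)) := Finset.prod_range_add _ _ _
          _ = (∏ i ∈ range (n - l), (1 - t * z ^ (i+1))) * ∏ i ∈ range l, (1 - t * z ^ (n - i)) := by
              congr 1
              rw [← Finset.prod_range_reflect (fun i => 1 - t * z ^ (n - i)) l]
              refine Finset.prod_congr rfl fun j hj => ?_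
              have hj' := Finset.mem_range.mp hj
              have : (n - l) + j + 1 = n - (l - 1 - j) := by omega
              rw [this]
      have hQ : (∏ i ∈ range l, (1 - t * z ^ (n - i))) ≠ 0 := by
        rw [Finset.prod_ne_zero_iff]
        intro i hi
        have hi' := Finset.mem_range.mp hi
        have := htz (n - i) (by omega) (by omega)
        exact sub_ne_zero.mpr (by simpa [eq_comm] using this)
      have hd : (∏ i ∈ range l, (1 - z ^ (i+1))) ≠ 0 := dprod_ne z n l hl' hz
      have htn : (t : ℂ) ^ n ≠ 0 := pow_ne_zero _ ht
      have hzp : t ^ (-(n : ℤ)) = (t ^ n)⁻¹ := by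
        rw [zpow_neg, zpow_natCast]
      rw [hprod, hsplit, hzp]
      unfold Cz
      field_simp
    rw [Finset.sum_congr rfl step, Finset.sum_sub_distrib, keyBhat z n hz t,
      ← Finset.mul_sum, keyB z n hz t, sub_self]
  exact (mul_eq_zero.mp h).resolve_right hD
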